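/- arXiv:1812.08269 — 6 statements merged into one kernel-verified Lean document; each statement's English description precedes it below -/
import Mathlib

section
/- (Galois connection) Let k > 0, let L ⊆ Σ* be a language, and let Z be a k-test vector. Then α_k(L) ⊑ Z if and only if L ⊆ γ_k(Z). -/
open Set
open scoped symmDiff

/-- A candidate `k`-test vector: a 4-tuple of sets of strings
(`I` prefixes, `F` suffixes, `T` segments, `C` short strings). -/
structure KTV (A : Type*) where
  I : Set (List A)
  F : Set (List A)
  T : Set (List A)
  C : Set (List A)

variable {A : Type*}

/-- `Z` is a genuine `k`-test vector. -/
def IsKTV (k : ℕ) (Z : KTV A) : Prop :=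
  Z.I ⊆ {w : List A | w.length = k - 1} ∧
  Z.F ⊆ {w : List A | w.length = k - 1} ∧
  Z.T ⊆ {w : List A | w.length = k} ∧
  Z.C ⊆ {w : List A | w.length < k} ∧
  Z.I ∩ Z.F = Z.C ∩ {w : List A | w.length = k - 1}

/-- The componentwise order `⊑` on `k`-test vectors. -/
def ktvLE (Z Z' : KTV A) : Prop :=
  Z.I ⊆ Z'.I ∧ Z.F ⊆ Z'.F ∧ Z.T ⊆ Z'.T ∧ Z.C ⊆ Z'.C

/-- The union `Z ⊔ Z'` of `k`-test vectors. -/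
def ktvUnion (Z Z' : KTV A) : KTV A :=
  ⟨Z.I ∪ Z'.I, Z.F ∪ Z'.F, Z.T ∪ Z'.T,
   Z.C ∪ Z'.C ∪ (Z.I ∩ Z'.F) ∪ (Z'.I ∩ Z.F)⟩

/-- The intersection `Z ⊓ Z'` of `k`-test vectors. -/
def ktvInter (Z Z' : KTV A) : KTV A :=
  ⟨Z.I ∩ Z'.I, Z.F ∩ Z'.F, Z.T ∩ Z'.T, Z.C ∩ Z'.C⟩

/-- The symmetric difference `Z △ Z'` of `k`-test vectors. -/
def ktvSymmDiff (Z Z' : KTV A) : KTV A :=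
  ⟨Z.I ∆ Z'.I, Z.F ∆ Z'.F, Z.T ∆ Z'.T,
   Z.C ∆ Z'.C ∆ (Z'.I ∩ Z.F) ∆ (Z.I ∩ Z'.F)⟩

/-- The least `k`-test vector `⊥ = ⟨∅,∅,∅,∅⟩`. -/
def ktvBot (A : Type*) : KTV A := ⟨∅, ∅, ∅, ∅⟩

/-- The greatest `k`-test vector `⊤ = ⟨Σ^{k-1}, Σ^{k-1}, Σ^k, Σ^{<k}⟩`. -/
def ktvTop (A : Type*) (k : ℕ) : KTV A :=
  ⟨{w | w.length = k - 1}, {w | w.length = k - 1},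
   {w | w.length = k}, {w | w.length < k}⟩

/-- `I_k(L)`: length-`(k-1)` prefixes of words of `L`. -/
def Ik (k : ℕ) (L : Set (List A)) : Set (List A) :=
  {u | u.length = k - 1 ∧ ∃ v, u ++ v ∈ L}

/-- `F_k(L)`: length-`(k-1)` suffixes of words of `L`. -/
def Fk (k : ℕ) (L : Set (List A)) : Set (List A) :=
  {w | w.length = k - 1 ∧ ∃ v, v ++ w ∈ L}

/-- `T_k(L)`: length-`k` substrings of words of `L`. -/
def Tk (k : ℕ) (L : Set (List A)) : Set (List A) :=
  {v | v.length = k ∧ ∃ u w, u ++ v ++ w ∈ L}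

/-- `C_k(L) = (L ∩ Σ^{<k-1}) ∪ (I_k(L) ∩ F_k(L))`. -/
def Ck (k : ℕ) (L : Set (List A)) : Set (List A) :=
  (L ∩ {w | w.length < k - 1}) ∪ (Ik k L ∩ Fk k L)

/-- `α_k(L) = ⟨I_k(L), F_k(L), T_k(L), C_k(L)⟩`. -/
def alphaK (k : ℕ) (L : Set (List A)) : KTV A :=
  ⟨Ik k L, Fk k L, Tk k L, Ck k L⟩

/-- `γ_k(Z) = C ∪ ((IΣ* ∩ Σ*F) \ (Σ*(Σ^k \ T)Σ*))`. -/
def gammaK (k : ℕ) (Z : KTV A) : Set (List A) :=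
  Z.C ∪ (({w | ∃ u ∈ Z.I, u <+: w} ∩ {w | ∃ u ∈ Z.F, u <:+ w}) \
    {w | ∃ v, v.length = k ∧ v ∉ Z.T ∧ v <:+: w})

/-- `L` is `k`-testable in the strict sense. -/
def IsKTSS (k : ℕ) (L : Set (List A)) : Prop :=
  ∃ Z : KTV A, IsKTV k Z ∧ gammaK k Z = L

/-- The cardinality `|Z| = |I| + |F| + |T| + |C ∩ Σ^{<k-1}|` of a `k`-test vector. -/
noncomputable def ktvCard (k : ℕ) (Z : KTV A) : ℕ :=
  Z.I.ncard + Z.F.ncard + Z.T.ncard + (Z.C ∩ {w : List A | w.length < k - 1}).ncard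

/-!
This is the usual unit/counit argument for a Galois connection: `α_k` and `γ_k` are monotone,
`L ⊆ γ_k(α_k L)` because every word of `L` is either short (hence in `C_k(L)`) or has its
prefix, suffix and factors recorded in `α_k(L)`, and `α_k(γ_k Z) ⊑ Z` for a genuine test
vector `Z`. The last inclusion is where the constraint `I ∩ F = C ∩ Σ^{k-1}` enters: a word of
`C` long enough to have a prefix of length `k - 1` has length exactly `k - 1`, so it is its own
prefix and suffix and lies in `I ∩ F`.
-/

theorem ktvLE_trans {Z₁ Z₂ Z₃ : KTV A} (h₁₂ : ktvLE Z₁ Z₂) (h₂₃ : ktvLE Z₂ Z₃) :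
    ktvLE Z₁ Z₃ :=
  ⟨h₁₂.1.trans h₂₃.1, h₁₂.2.1.trans h₂₃.2.1, h₁₂.2.2.1.trans h₂₃.2.2.1,
    h₁₂.2.2.2.trans h₂₃.2.2.2⟩

theorem Ik_mono {k : ℕ} {L L' : Set (List A)} (h : L ⊆ L') : Ik k L ⊆ Ik k L' :=
  fun _ ⟨hlen, v, hv⟩ => ⟨hlen, v, h hv⟩

theorem Fk_mono {k : ℕ} {L L' : Set (List A)} (h : L ⊆ L') : Fk k L ⊆ Fk k L' :=
  fun _ ⟨hlen, v, hv⟩ => ⟨hlen, v, h hv⟩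

theorem Tk_mono {k : ℕ} {L L' : Set (List A)} (h : L ⊆ L') : Tk k L ⊆ Tk k L' :=
  fun _ ⟨hlen, u, w, hv⟩ => ⟨hlen, u, w, h hv⟩

theorem Ck_mono {k : ℕ} {L L' : Set (List A)} (h : L ⊆ L') : Ck k L ⊆ Ck k L' :=
  union_subset_union (inter_subset_inter_left _ h) (inter_subset_inter (Ik_mono h) (Fk_mono h))

theorem alphaK_mono {k : ℕ} {L L' : Set (List A)} (h : L ⊆ L') :
    ktvLE (alphaK k L) (alphaK k L') :=
  ⟨Ik_mono h, Fk_mono h, Tk_mono h, Ck_mono h⟩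

theorem gammaK_mono {k : ℕ} {Z Z' : KTV A} (h : ktvLE Z Z') : gammaK k Z ⊆ gammaK k Z' := by
  obtain ⟨hI, hF, hT, hC⟩ := h
  rintro w (hw | ⟨⟨⟨u, hu, hpre⟩, ⟨u', hu', hsuf⟩⟩, hfactors⟩)
  · exact Or.inl (hC hw)
  · refine Or.inr ⟨⟨⟨u, hI hu, hpre⟩, ⟨u', hF hu', hsuf⟩⟩, ?_⟩
    rintro ⟨v, hvlen, hvT, hinf⟩
    exact hfactors ⟨v, hvlen, fun hv => hvT (hT hv), hinf⟩

theorem take_mem_Ik {k : ℕ} {L : Set (List A)} {w : List A} (hw : w ∈ L)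
    (hlen : k - 1 ≤ w.length) : w.take (k - 1) ∈ Ik k L :=
  ⟨by simpa using hlen, w.drop (k - 1), by rwa [List.take_append_drop]⟩

theorem drop_mem_Fk {k : ℕ} {L : Set (List A)} {w : List A} (hw : w ∈ L)
    (hlen : k - 1 ≤ w.length) : w.drop (w.length - (k - 1)) ∈ Fk k L :=
  ⟨by simp; omega, w.take (w.length - (k - 1)), by rwa [List.take_append_drop]⟩

theorem mem_Tk_of_isInfix {k : ℕ} {L : Set (List A)} {v w : List A} (hw : w ∈ L)
    (hlen : v.length = k) (hv : v <:+: w) : v ∈ Tk k L := by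
  obtain ⟨s, t, rfl⟩ := hv
  exact ⟨hlen, s, t, hw⟩

theorem subset_gammaK_alphaK (k : ℕ) (L : Set (List A)) : L ⊆ gammaK k (alphaK k L) := by
  intro w hw
  by_cases hshort : w.length < k - 1
  · exact Or.inl (Or.inl ⟨hw, hshort⟩)
  · rw [not_lt] at hshort
    refine Or.inr ⟨⟨⟨_, take_mem_Ik hw hshort, w.take_prefix _⟩,
      ⟨_, drop_mem_Fk hw hshort, w.drop_suffix _⟩⟩, ?_⟩
    rintro ⟨v, hvlen, hvT, hinf⟩
    exact hvT (mem_Tk_of_isInfix hw hvlen hinf)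

namespace IsKTV

variable {k : ℕ} {Z : KTV A}

theorem mem_I_of_isPrefix (hZ : IsKTV k Z) {u w : List A} (hw : w ∈ gammaK k Z)
    (hu : u <+: w) (hlen : u.length = k - 1) : u ∈ Z.I := by
  obtain ⟨hI, -, -, hC, hIF⟩ := hZ
  rcases hw with hwC | ⟨⟨⟨u', hu', hpre'⟩, -⟩, -⟩
  · have hwlen : w.length < k := hC hwC
    obtain rfl : u = w := hu.eq_of_length (by have := hu.length_le; omega)
    exact (hIF.symm ▸ ⟨hwC, hlen⟩ : u ∈ Z.I ∩ Z.F).1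
  · have hu'len : u'.length = u.length := (hI hu').trans hlen.symm
    rwa [List.prefix_iff_eq_take.1 hu, ← hu'len, ← List.prefix_iff_eq_take.1 hpre']

theorem mem_F_of_isSuffix (hZ : IsKTV k Z) {u w : List A} (hw : w ∈ gammaK k Z)
    (hu : u <:+ w) (hlen : u.length = k - 1) : u ∈ Z.F := by
  obtain ⟨-, hF, -, hC, hIF⟩ := hZ
  rcases hw with hwC | ⟨⟨-, ⟨u', hu', hsuf'⟩⟩, -⟩
  · have hwlen : w.length < k := hC hwC
    obtain rfl : u = w := hu.eq_of_length (by have := hu.length_le; omega)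
    exact (hIF.symm ▸ ⟨hwC, hlen⟩ : u ∈ Z.I ∩ Z.F).2
  · have hu'len : u'.length = u.length := (hF hu').trans hlen.symm
    rwa [List.suffix_iff_eq_drop.1 hu, ← hu'len, ← List.suffix_iff_eq_drop.1 hsuf']

theorem mem_T_of_isInfix (hZ : IsKTV k Z) {v w : List A} (hw : w ∈ gammaK k Z)
    (hv : v <:+: w) (hlen : v.length = k) : v ∈ Z.T := by
  rcases hw with hwC | ⟨-, hfactors⟩
  · have hwlen : w.length < k := hZ.2.2.2.1 hwC
    have := hv.length_le
    omega
  · by_contra hvT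
    exact hfactors ⟨v, hlen, hvT, hv⟩

theorem mem_C_of_length_lt (hZ : IsKTV k Z) {w : List A} (hw : w ∈ gammaK k Z)
    (hshort : w.length < k - 1) : w ∈ Z.C := by
  rcases hw with hwC | ⟨⟨⟨u, hu, hpre⟩, -⟩, -⟩
  · exact hwC
  · have hulen : u.length = k - 1 := hZ.1 hu
    have := hpre.length_le
    omega

theorem alphaK_gammaK_le (hZ : IsKTV k Z) : ktvLE (alphaK k (gammaK k Z)) Z := by
  have hIk : Ik k (gammaK k Z) ⊆ Z.I := fun u ⟨hlen, v, hv⟩ =>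
    hZ.mem_I_of_isPrefix hv (u.prefix_append v) hlen
  have hFk : Fk k (gammaK k Z) ⊆ Z.F := fun u ⟨hlen, v, hv⟩ =>
    hZ.mem_F_of_isSuffix hv (v.suffix_append u) hlen
  refine ⟨hIk, hFk,
    fun v ⟨hlen, s, t, hv⟩ => hZ.mem_T_of_isInfix hv (List.infix_append s v t) hlen, ?_⟩
  rintro w (⟨hw, hshort⟩ | ⟨hwI, hwF⟩)
  · exact hZ.mem_C_of_length_lt hw hshort
  · have hwIF : w ∈ Z.I ∩ Z.F := ⟨hIk hwI, hFk hwF⟩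
    rw [hZ.2.2.2.2] at hwIF
    exact hwIF.1

end IsKTV

theorem stmt4_general {A : Type*} (k : ℕ)
    (L : Set (List A)) (Z : KTV A) (hZ : IsKTV k Z) :
    ktvLE (alphaK k L) Z ↔ L ⊆ gammaK k Z :=
  ⟨fun h => (subset_gammaK_alphaK k L).trans (gammaK_mono h),
    fun h => ktvLE_trans (alphaK_mono h) hZ.alphaK_gammaK_le⟩

/-- Galois connection: `α_k(L) ⊑ Z ↔ L ⊆ γ_k(Z)`. -/
theorem stmt4 {A : Type*} [Fintype A] (k : ℕ) (hk : 0 < k)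
    (L : Set (List A)) (Z : KTV A) (hZ : IsKTV k Z) :
    ktvLE (alphaK k L) Z ↔ L ⊆ gammaK k Z :=
  stmt4_general k L Z hZ
end

section
/- For all k > 0 and every k-test vector Z, α_k(γ_k(Z)) ⊑ Z; that is, the associated kernel operator α_k ∘ γ_k is deflationary. -/
open Set
open scoped symmDiff

variable {A : Type*}

/-!
A word of `γ_k(Z)` either lies in `C`, where the compatibility `I ∩ F = C ∩ Σ^{k-1}` puts every
word of length `k - 1` into `I ∩ F` and there are no longer ones, or it is read off from `Z`
directly: its unique length-`(k-1)` prefix is in `I`, its suffix in `F`, and its length-`k`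
factors in `T`. So `α_k` recovers nothing outside `Z`.
-/

namespace IsKTV

variable {k : ℕ} {Z : KTV A}

theorem mem_I_inter_F_of_mem_C (hZ : IsKTV k Z) {w : List A} (hw : w ∈ Z.C)
    (hlen : k - 1 ≤ w.length) : w ∈ Z.I ∩ Z.F := by
  have hlt : w.length < k := hZ.2.2.2.1 hw
  rw [hZ.2.2.2.2]
  exact ⟨hw, show w.length = k - 1 by omega⟩

theorem Ik_gammaK_subset (hZ : IsKTV k Z) : Ik k (gammaK k Z) ⊆ Z.I := by
  rintro u ⟨hu, v, hC | ⟨⟨⟨u', hu'I, hu'⟩, -⟩, -⟩⟩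
  · have huv := hZ.mem_I_inter_F_of_mem_C hC (by rw [List.length_append]; omega)
    obtain rfl : v = [] := by simpa [hu] using hZ.1 huv.1
    simpa using huv.1
  · rw [List.prefix_iff_eq_take, hZ.1 hu'I, ← hu, List.take_left] at hu'
    exact hu' ▸ hu'I

theorem Fk_gammaK_subset (hZ : IsKTV k Z) : Fk k (gammaK k Z) ⊆ Z.F := by
  rintro w ⟨hw, v, hC | ⟨⟨-, ⟨w', hw'F, hw'⟩⟩, -⟩⟩
  · have hvw := hZ.mem_I_inter_F_of_mem_C hC (by rw [List.length_append]; omega)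
    obtain rfl : v = [] := by simpa [hw] using hZ.2.1 hvw.2
    simpa using hvw.2
  · rw [List.suffix_iff_eq_drop, hZ.2.1 hw'F, ← hw, List.length_append, Nat.add_sub_cancel,
      List.drop_left] at hw'
    exact hw' ▸ hw'F

theorem Tk_gammaK_subset (hZ : IsKTV k Z) : Tk k (gammaK k Z) ⊆ Z.T := by
  rintro v ⟨hv, u, w, hC | ⟨-, hfactors⟩⟩
  · have hlt : (u ++ v ++ w).length < k := hZ.2.2.2.1 hC
    simp only [List.length_append] at hlt
    omega
  · by_contra hvT
    exact hfactors ⟨v, hv, hvT, u, w, rfl⟩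

theorem Ck_gammaK_subset (hZ : IsKTV k Z) : Ck k (gammaK k Z) ⊆ Z.C := by
  rintro w (⟨hC | ⟨⟨⟨u, huI, hu⟩, -⟩, -⟩, hshort⟩ | hIF)
  · exact hC
  · have hlong : u.length ≤ w.length := hu.length_le
    have hshort : w.length < k - 1 := hshort
    rw [hZ.1 huI] at hlong
    omega
  · have hw : w ∈ Z.I ∩ Z.F := ⟨hZ.Ik_gammaK_subset hIF.1, hZ.Fk_gammaK_subset hIF.2⟩
    rw [hZ.2.2.2.2] at hw
    exact hw.1

end IsKTV

theorem stmt6_general {A : Type*} (k : ℕ)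
    (Z : KTV A) (hZ : IsKTV k Z) :
    ktvLE (alphaK k (gammaK k Z)) Z :=
  ⟨hZ.Ik_gammaK_subset, hZ.Fk_gammaK_subset, hZ.Tk_gammaK_subset, hZ.Ck_gammaK_subset⟩

/-- the kernel operator `α_k ∘ γ_k` is deflationary. -/
theorem stmt6 {A : Type*} [Fintype A] (k : ℕ) (hk : 0 < k)
    (Z : KTV A) (hZ : IsKTV k Z) :
    ktvLE (alphaK k (gammaK k Z)) Z :=
  stmt6_general k Z hZ
end

section
/- Let Z = ⟨I,F,T,C⟩ be a k-test vector, for some k > 0, and let Z' be the k-test vector obtained from Z by deleting from I all junk prefixes, from F all junk suffixes, and from T all junk segments. Then α_k(γ_k(Z)) = Z'; in particular Z' is canonical. -/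
open Set
open scoped symmDiff

variable {A : Type*}

/-- `u` is a junk prefix of `Z`. -/
def JunkPrefix (k : ℕ) {A : Type*} (Z : KTV A) (u : List A) : Prop :=
  u ∈ Z.I ∧ ¬ ∃ w ∈ gammaK k Z, u <+: w

/-- `u` is a junk suffix of `Z`. -/
def JunkSuffix (k : ℕ) {A : Type*} (Z : KTV A) (u : List A) : Prop :=
  u ∈ Z.F ∧ ¬ ∃ w ∈ gammaK k Z, u <:+ w

/-- `u` is a junk segment of `Z`. -/
def JunkSegment (k : ℕ) {A : Type*} (Z : KTV A) (u : List A) : Prop :=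
  u ∈ Z.T ∧ ¬ ∃ w ∈ gammaK k Z, u <:+: w

/-- `Z` is canonical: no junk prefixes, junk suffixes or junk segments. -/
def Canonical (k : ℕ) {A : Type*} (Z : KTV A) : Prop :=
  (∀ u, ¬ JunkPrefix k Z u) ∧ (∀ u, ¬ JunkSuffix k Z u) ∧ (∀ u, ¬ JunkSegment k Z u)

/-! The length-`(k-1)` prefixes of a word of `γ_k(Z)` lie in `I`: for a word of the second
part of `γ_k(Z)` this is its certifying prefix, and a word of `C` with a prefix of length `k - 1`
has length exactly `k - 1`, so it lies in `C ∩ Σ^{k-1} = I ∩ F`. Suffixes and segments are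
handled the same way, so `α_k(γ_k(Z))` consists of the non-junk parts of `Z` together with `C`.
Deleting junk does not change `γ_k(Z)`, because every element of `I`, `F`, `T` used to certify a
word of `γ_k(Z)` occurs in that word; hence the pruned vector is canonical. -/

def pruneJunk (k : ℕ) (Z : KTV A) : KTV A :=
  ⟨Z.I \ {u | JunkPrefix k Z u}, Z.F \ {u | JunkSuffix k Z u},
    Z.T \ {u | JunkSegment k Z u}, Z.C⟩

section

variable {k : ℕ} {Z : KTV A} {L : Set (List A)} {u w : List A}

theorem mem_gammaK :
    w ∈ gammaK k Z ↔ w ∈ Z.C ∨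
      ((∃ u ∈ Z.I, u <+: w) ∧ (∃ u ∈ Z.F, u <:+ w) ∧
        ∀ v, v.length = k → v <:+: w → v ∈ Z.T) := by
  simp only [gammaK, mem_union, mem_sdiff, mem_inter_iff, mem_ofPred_eq, not_exists, not_and,
    not_imp_not, and_assoc]

theorem mem_Ik : u ∈ Ik k L ↔ u.length = k - 1 ∧ ∃ w ∈ L, u <+: w := by
  simp only [Ik, mem_ofPred_eq, List.IsPrefix]
  grind

theorem mem_Fk : u ∈ Fk k L ↔ u.length = k - 1 ∧ ∃ w ∈ L, u <:+ w := by
  simp only [Fk, mem_ofPred_eq, List.IsSuffix]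
  grind

theorem mem_Tk : u ∈ Tk k L ↔ u.length = k ∧ ∃ w ∈ L, u <:+: w := by
  simp only [Tk, mem_ofPred_eq, List.IsInfix]
  grind

namespace IsKTV

theorem mem_inter_of_mem_C (hZ : IsKTV k Z) (hw : w ∈ Z.C) (hlen : w.length = k - 1) :
    w ∈ Z.I ∩ Z.F :=
  hZ.2.2.2.2 ▸ ⟨hw, hlen⟩

theorem prefix_mem_I (hZ : IsKTV k Z) (hw : w ∈ gammaK k Z) (hu : u <+: w)
    (hlen : u.length = k - 1) : u ∈ Z.I := by
  rcases mem_gammaK.mp hw with hwC | ⟨⟨p, hp, hpw⟩, -, -⟩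
  · obtain rfl : u = w := hu.eq_of_length (by grind [hZ.2.2.2.1 hwC, hu.length_le])
    exact (hZ.mem_inter_of_mem_C hwC hlen).1
  · have hpu : p.length = u.length := by rw [hZ.1 hp, hlen]
    exact (List.prefix_of_prefix_length_le hpw hu hpu.le).eq_of_length hpu ▸ hp

theorem suffix_mem_F (hZ : IsKTV k Z) (hw : w ∈ gammaK k Z) (hu : u <:+ w)
    (hlen : u.length = k - 1) : u ∈ Z.F := by
  rcases mem_gammaK.mp hw with hwC | ⟨-, ⟨p, hp, hpw⟩, -⟩
  · obtain rfl : u = w := hu.eq_of_length (by grind [hZ.2.2.2.1 hwC, hu.length_le])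
    exact (hZ.mem_inter_of_mem_C hwC hlen).2
  · have hpu : p.length = u.length := by rw [hZ.2.1 hp, hlen]
    exact (List.suffix_of_suffix_length_le hpw hu hpu.le).eq_of_length hpu ▸ hp

theorem infix_mem_T (hZ : IsKTV k Z) (hw : w ∈ gammaK k Z) (hu : u <:+: w) (hlen : u.length = k) :
    u ∈ Z.T := by
  rcases mem_gammaK.mp hw with hwC | ⟨-, -, hT⟩
  · grind [hZ.2.2.2.1 hwC, hu.length_le]
  · exact hT u hlen hu

theorem mem_C_of_mem_gammaK (hZ : IsKTV k Z) (hw : w ∈ gammaK k Z) (hlen : w.length < k - 1) :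
    w ∈ Z.C := by
  rcases mem_gammaK.mp hw with hwC | ⟨⟨p, hp, hpw⟩, -, -⟩
  · exact hwC
  · grind [hZ.1 hp, hpw.length_le]

end IsKTV

theorem Ik_gammaK (hZ : IsKTV k Z) : Ik k (gammaK k Z) = (pruneJunk k Z).I := by
  ext u
  simp only [pruneJunk, mem_Ik, mem_sdiff, mem_ofPred_eq, JunkPrefix, not_and, not_not]
  constructor
  · rintro ⟨hlen, w, hw, hu⟩
    exact ⟨hZ.prefix_mem_I hw hu hlen, fun _ => ⟨w, hw, hu⟩⟩
  · rintro ⟨hu, hw⟩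
    exact ⟨hZ.1 hu, hw hu⟩

theorem Fk_gammaK (hZ : IsKTV k Z) : Fk k (gammaK k Z) = (pruneJunk k Z).F := by
  ext u
  simp only [pruneJunk, mem_Fk, mem_sdiff, mem_ofPred_eq, JunkSuffix, not_and, not_not]
  constructor
  · rintro ⟨hlen, w, hw, hu⟩
    exact ⟨hZ.suffix_mem_F hw hu hlen, fun _ => ⟨w, hw, hu⟩⟩
  · rintro ⟨hu, hw⟩
    exact ⟨hZ.2.1 hu, hw hu⟩

theorem Tk_gammaK (hZ : IsKTV k Z) : Tk k (gammaK k Z) = (pruneJunk k Z).T := by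
  ext u
  simp only [pruneJunk, mem_Tk, mem_sdiff, mem_ofPred_eq, JunkSegment, not_and, not_not]
  constructor
  · rintro ⟨hlen, w, hw, hu⟩
    exact ⟨hZ.infix_mem_T hw hu hlen, fun _ => ⟨w, hw, hu⟩⟩
  · rintro ⟨hu, hw⟩
    exact ⟨hZ.2.2.1 hu, hw hu⟩

theorem Ck_gammaK (hZ : IsKTV k Z) : Ck k (gammaK k Z) = Z.C := by
  ext w
  simp only [Ck, mem_union, mem_inter_iff, mem_ofPred_eq]
  constructor
  · rintro (⟨hw, hlen⟩ | ⟨hwI, hwF⟩)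
    · exact hZ.mem_C_of_mem_gammaK hw hlen
    · obtain ⟨hlen, v, hv, hwv⟩ := mem_Ik.mp hwI
      obtain ⟨-, v', hv', hwv'⟩ := mem_Fk.mp hwF
      have hIF : w ∈ Z.I ∩ Z.F :=
        ⟨hZ.prefix_mem_I hv hwv hlen, hZ.suffix_mem_F hv' hwv' hlen⟩
      exact (hZ.2.2.2.2 ▸ hIF).1
  · intro hw
    have hwγ : w ∈ gammaK k Z := Or.inl hw
    rcases Nat.lt_or_ge w.length (k - 1) with hlen | hlen
    · exact Or.inl ⟨hwγ, hlen⟩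
    · have hlen : w.length = k - 1 := by grind [hZ.2.2.2.1 hw]
      exact Or.inr ⟨mem_Ik.mpr ⟨hlen, w, hwγ, List.prefix_refl w⟩,
        mem_Fk.mpr ⟨hlen, w, hwγ, List.suffix_refl w⟩⟩

theorem alphaK_gammaK (hZ : IsKTV k Z) : alphaK k (gammaK k Z) = pruneJunk k Z := by
  rw [alphaK, Ik_gammaK hZ, Fk_gammaK hZ, Tk_gammaK hZ, Ck_gammaK hZ, pruneJunk]

theorem gammaK_pruneJunk : gammaK k (pruneJunk k Z) = gammaK k Z := by
  ext w
  constructor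
  · intro hw
    rcases mem_gammaK.mp hw with hwC | ⟨⟨u, hu, hwu⟩, ⟨v, hv, hwv⟩, hT⟩
    · exact Or.inl hwC
    · exact mem_gammaK.mpr <| Or.inr
        ⟨⟨u, hu.1, hwu⟩, ⟨v, hv.1, hwv⟩, fun x hx hwx => (hT x hx hwx).1⟩
  · intro hw
    rcases mem_gammaK.mp hw with hwC | ⟨⟨u, hu, hwu⟩, ⟨v, hv, hwv⟩, hT⟩
    · exact Or.inl hwC
    · exact mem_gammaK.mpr <| Or.inr ⟨⟨u, ⟨hu, fun hj => hj.2 ⟨w, hw, hwu⟩⟩, hwu⟩,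
        ⟨v, ⟨hv, fun hj => hj.2 ⟨w, hw, hwv⟩⟩, hwv⟩,
        fun x hx hwx => ⟨hT x hx hwx, fun hj => hj.2 ⟨w, hw, hwx⟩⟩⟩

theorem canonical_pruneJunk : Canonical k (pruneJunk k Z) := by
  refine ⟨fun u ⟨⟨hu, hnj⟩, hno⟩ => ?_, fun u ⟨⟨hu, hnj⟩, hno⟩ => ?_,
    fun u ⟨⟨hu, hnj⟩, hno⟩ => ?_⟩ <;>
  rw [gammaK_pruneJunk] at hno <;>
  exact hnj ⟨hu, hno⟩

end

theorem stmt10_general {A : Type*} (k : ℕ)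
    (Z : KTV A) (hZ : IsKTV k Z) :
    alphaK k (gammaK k Z) =
      (⟨Z.I \ {u | JunkPrefix k Z u}, Z.F \ {u | JunkSuffix k Z u},
        Z.T \ {u | JunkSegment k Z u}, Z.C⟩ : KTV A) ∧
    Canonical k (⟨Z.I \ {u | JunkPrefix k Z u}, Z.F \ {u | JunkSuffix k Z u},
        Z.T \ {u | JunkSegment k Z u}, Z.C⟩ : KTV A) :=
  ⟨alphaK_gammaK hZ, canonical_pruneJunk⟩

/-- deleting all junk prefixes, suffixes and segments from `Z`
yields exactly `α_k(γ_k(Z))`, which is canonical. -/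
theorem stmt10 {A : Type*} [Fintype A] (k : ℕ) (hk : 0 < k)
    (Z : KTV A) (hZ : IsKTV k Z) :
    alphaK k (gammaK k Z) =
      (⟨Z.I \ {u | JunkPrefix k Z u}, Z.F \ {u | JunkSuffix k Z u},
        Z.T \ {u | JunkSegment k Z u}, Z.C⟩ : KTV A) ∧
    Canonical k (⟨Z.I \ {u | JunkPrefix k Z u}, Z.F \ {u | JunkSuffix k Z u},
        Z.T \ {u | JunkSegment k Z u}, Z.C⟩ : KTV A) :=
  stmt10_general k Z hZ
end

section
/- Let k > 0 and let L = L_1 ∪ ⋯ ∪ L_l, where each L_p is a k-TSS language over the finite alphabet Σ, and let w_1, w_2, w_3, … be an enumeration of L (a function from the positive integers onto L). Setting K_i = ⋃_{j=1}^{i} γ_k(α_k({w_j})), we have K_i ⊆ L for all i, and there exists n such that for all m ≥ n, K_m = L. Hence any finite union of k-TSS languages is identified in the limit from positive examples. -/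
open Set
open scoped symmDiff

variable {A : Type*}

theorem isKTV_alphaK {k : ℕ} (hk : 0 < k) (L : Set (List A)) : IsKTV k (alphaK k L) := by
  refine ⟨fun u hu => hu.1, fun u hu => hu.1, fun u hu => hu.1, ?_, ?_⟩
  · rintro c (⟨-, hc⟩ | ⟨⟨hc, -⟩, -⟩) <;> simp only [mem_ofPred_eq] at hc ⊢ <;> omega
  · ext c
    constructor
    · exact fun hc => ⟨Or.inr hc, hc.1.1⟩
    · rintro ⟨⟨-, hc⟩ | hc, hlen⟩
      · exact (hc.ne hlen).elim
      · exact hc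

theorem finite_setOf_isKTV [Finite A] (k : ℕ) : {Z : KTV A | IsKTV k Z}.Finite := by
  have hS := (List.finite_length_eq A (k - 1)).finite_subsets
  refine ((hS.prod (hS.prod ((List.finite_length_eq A k).finite_subsets.prod
      (List.finite_length_lt A k).finite_subsets))).image
    fun p => (⟨p.1, p.2.1, p.2.2.1, p.2.2.2⟩ : KTV A)).subset ?_
  rintro ⟨I, F, T, C⟩ ⟨hI, hF, hT, hC, -⟩
  exact ⟨(I, F, T, C), ⟨hI, hF, hT, hC⟩, rfl⟩

theorem mem_gammaK_alphaK_singleton (k : ℕ) (x : List A) : x ∈ gammaK k (alphaK k {x}) := by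
  rcases lt_or_ge x.length (k - 1) with h | h
  · exact Or.inl (Or.inl ⟨rfl, h⟩)
  · refine Or.inr ⟨⟨⟨x.take (k - 1), ⟨?_, List.take_prefix _ _⟩, List.take_prefix _ _⟩,
      x.drop (x.length - (k - 1)), ⟨?_, List.drop_suffix _ _⟩, List.drop_suffix _ _⟩,
      fun ⟨v, hv, hvT, hvx⟩ => hvT ⟨hv, hvx⟩⟩
    all_goals simp only [List.length_take, List.length_drop]; omega

namespace IsKTV

variable {k : ℕ} {Z : KTV A} {x : List A}

theorem mem_I_inter_F (hZ : IsKTV k Z) (hx : x ∈ Z.C) (hlen : x.length = k - 1) :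
    x ∈ Z.I ∩ Z.F := by
  rw [hZ.2.2.2.2]
  exact ⟨hx, hlen⟩

theorem Ik_singleton_subset (hZ : IsKTV k Z) (hx : x ∈ gammaK k Z) : Ik k {x} ⊆ Z.I := by
  rintro u ⟨hu, hux : u <+: x⟩
  rcases hx with hxC | ⟨⟨⟨u', hu', hu'x⟩, -⟩, -⟩
  · have hxk : x.length < k := hZ.2.2.2.1 hxC
    obtain rfl : u = x := hux.eq_of_length_le (by omega)
    exact (hZ.mem_I_inter_F hxC hu).1
  · have hlen : u'.length = u.length := (hZ.1 hu').trans hu.symm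
    obtain rfl : u' = u := (List.prefix_of_prefix_length_le hu'x hux hlen.le).eq_of_length hlen
    exact hu'

theorem Fk_singleton_subset (hZ : IsKTV k Z) (hx : x ∈ gammaK k Z) : Fk k {x} ⊆ Z.F := by
  rintro u ⟨hu, hux : u <:+ x⟩
  rcases hx with hxC | ⟨⟨-, u', hu', hu'x⟩, -⟩
  · have hxk : x.length < k := hZ.2.2.2.1 hxC
    obtain rfl : u = x := hux.eq_of_length_le (by omega)
    exact (hZ.mem_I_inter_F hxC hu).2
  · have hlen : u'.length = u.length := (hZ.2.1 hu').trans hu.symm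
    obtain rfl : u' = u := (List.suffix_of_suffix_length_le hu'x hux hlen.le).eq_of_length hlen
    exact hu'

theorem Tk_singleton_subset (hZ : IsKTV k Z) (hx : x ∈ gammaK k Z) : Tk k {x} ⊆ Z.T := by
  rintro v ⟨hv, hvx⟩
  rcases hx with hxC | ⟨-, hbad⟩
  · have hxk : x.length < k := hZ.2.2.2.1 hxC
    have hvx : v.length ≤ x.length := List.IsInfix.length_le hvx
    omega
  · by_contra hvT
    exact hbad ⟨v, hv, hvT, hvx⟩

theorem alphaK_singleton_le (hZ : IsKTV k Z) (hx : x ∈ gammaK k Z) :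
    ktvLE (alphaK k {x}) Z := by
  refine ⟨hZ.Ik_singleton_subset hx, hZ.Fk_singleton_subset hx, hZ.Tk_singleton_subset hx, ?_⟩
  rintro c (⟨rfl, hc⟩ | ⟨hcI, hcF⟩)
  · rcases hx with hxC | ⟨⟨⟨u, hu, hux⟩, -⟩, -⟩
    · exact hxC
    · have hu : u.length = k - 1 := hZ.1 hu
      have hc : c.length < k - 1 := hc
      have := hux.length_le
      omega
  · have hc : c ∈ Z.I ∩ Z.F := ⟨hZ.Ik_singleton_subset hx hcI, hZ.Fk_singleton_subset hx hcF⟩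
    rw [hZ.2.2.2.2] at hc
    exact hc.1

end IsKTV

theorem IsKTSS.gammaK_alphaK_singleton_subset {k : ℕ} {L : Set (List A)} (hL : IsKTSS k L)
    {x : List A} (hx : x ∈ L) : gammaK k (alphaK k {x}) ⊆ L := by
  obtain ⟨Z, hZ, rfl⟩ := hL
  exact gammaK_mono (hZ.alphaK_singleton_le hx)

theorem exists_biUnion_lt_eq_iUnion_of_finite_range {α : Type*} (f : ℕ → Set α)
    (hf : (range f).Finite) : ∃ n, ∀ m ≥ n, ⋃ j < m, f j = ⋃ j, f j := by
  choose! g hg using fun s (hs : s ∈ range f) => hs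
  obtain ⟨N, hN⟩ := (hf.image g).bddAbove
  refine ⟨N + 1, fun m hm => (iUnion₂_subset fun j _ => subset_iUnion f j).antisymm
    (iUnion_subset fun j => ?_)⟩
  have hj : g (f j) < m := (hN (mem_image_of_mem g (mem_range_self j))).trans_lt (by omega)
  rw [← hg _ (mem_range_self j)]
  exact subset_iUnion₂ (s := fun j (_ : j < m) => f j) _ hj

/-- any finite union of `k`-TSS languages is identified in the
limit from positive examples, via `K_i = ⋃_{j≤i} γ_k(α_k({w_j}))`. -/
theorem stmt12 {A : Type*} [Fintype A] (k : ℕ) (hk : 0 < k)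
    (l : ℕ) (Ls : Fin l → Set (List A)) (hLs : ∀ p, IsKTSS k (Ls p))
    (L : Set (List A)) (hL : L = ⋃ p, Ls p)
    (w : ℕ → List A) (hmem : ∀ i, w i ∈ L) (hsurj : ∀ x ∈ L, ∃ i, w i = x) :
    (∀ i : ℕ, (⋃ j < i, gammaK k (alphaK k {w j})) ⊆ L) ∧
    ∃ n : ℕ, ∀ m ≥ n, (⋃ j < m, gammaK k (alphaK k {w j})) = L := by
  set K : ℕ → Set (List A) := fun j => gammaK k (alphaK k {w j})
  have hKL (j : ℕ) : K j ⊆ L := by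
    subst hL
    obtain ⟨p, hp⟩ := mem_iUnion.mp (hmem j)
    exact ((hLs p).gammaK_alphaK_singleton_subset hp).trans (subset_iUnion Ls p)
  have hUnion : ⋃ j, K j = L := (iUnion_subset hKL).antisymm fun x hx => by
    obtain ⟨j, rfl⟩ := hsurj x hx
    exact mem_iUnion_of_mem j (mem_gammaK_alphaK_singleton k (w j))
  have hfin : (range K).Finite := ((finite_setOf_isKTV k).image (gammaK k)).subset
    (range_subset_iff.2 fun j => mem_image_of_mem _ (isKTV_alphaK hk _))
  obtain ⟨n, hn⟩ := exists_biUnion_lt_eq_iUnion_of_finite_range K hfin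
  exact ⟨fun i => iUnion₂_subset fun j _ => hKL j, n, fun m hm => (hn m hm).trans hUnion⟩
end

section
/- The symmetric difference of k-test vectors is associative: for all k-test vectors Z, Z', Z'' (over alphabet Σ, for some k > 0), Z △ (Z' △ Z'') = (Z △ Z') △ Z''. -/
open Set
open scoped symmDiff

variable {A : Type*}

/-- After distributing `⊓` over `∆`, both sides are `c ∆ c' ∆ c''` together with the same six
cross terms `iₐ ⊓ f_b` (`a ≠ b`), only in a different order. -/
theorem symmDiff_inf_correction_assoc {α : Type*} [GeneralizedBooleanAlgebra α]
    (c c' c'' i i' i'' f f' f'' : α) :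
    c ∆ (c' ∆ c'' ∆ (i'' ⊓ f') ∆ (i' ⊓ f'')) ∆ ((i' ∆ i'') ⊓ f) ∆ (i ⊓ (f' ∆ f'')) =
      c ∆ c' ∆ (i' ⊓ f) ∆ (i ⊓ f') ∆ c'' ∆ (i'' ⊓ (f ∆ f')) ∆ ((i ∆ i') ⊓ f'') := by
  simp only [inf_symmDiff_distrib_left, inf_symmDiff_distrib_right]
  simp only [symmDiff_assoc, symmDiff_comm, symmDiff_left_comm]

theorem stmt16_general {A : Type*} (Z Z' Z'' : KTV A) :
    ktvSymmDiff Z (ktvSymmDiff Z' Z'') = ktvSymmDiff (ktvSymmDiff Z Z') Z'' := by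
  simp only [ktvSymmDiff, KTV.mk.injEq]
  exact ⟨(symmDiff_assoc _ _ _).symm, (symmDiff_assoc _ _ _).symm, (symmDiff_assoc _ _ _).symm,
    symmDiff_inf_correction_assoc _ _ _ _ _ _ _ _ _⟩

/-- `△` on `k`-test vectors is associative. -/
theorem stmt16 {A : Type*} [Fintype A] (k : ℕ) (hk : 0 < k)
    (Z Z' Z'' : KTV A) (hZ : IsKTV k Z) (hZ' : IsKTV k Z') (hZ'' : IsKTV k Z'') :
    ktvSymmDiff Z (ktvSymmDiff Z' Z'') = ktvSymmDiff (ktvSymmDiff Z Z') Z'' :=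
  stmt16_general Z Z' Z''
end

section
/- The distance function d(Z, Z') = |Z △ Z'| on the set 𝒯_k of k-test vectors is a metric: for all Z, Z', Z'' ∈ 𝒯_k, (1) d(Z,Z') ≥ 0; (2) d(Z,Z') = 0 if and only if Z = Z'; (3) d(Z,Z') = d(Z',Z); and (4) d(Z,Z'') ≤ d(Z,Z') + d(Z',Z''). -/
/-!
Componentwise, `d` is a sum of the metrics `|X △ Y|` on finite sets: the correction terms
`I' ∩ F` and `I ∩ F'` in the `C`-component of `Z △ Z'` consist of words of length `k - 1`, so they
are invisible to `|C ∩ Σ^{<k-1}|`. Hence `d(Z, Z')` is the sum of `|X △ X'|` over the components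
`I`, `F`, `T` and `C ∩ Σ^{<k-1}`, which gives symmetry and the triangle inequality. For
definiteness, the remaining part `C ∩ Σ^{k-1}` of a test vector equals `I ∩ F`, so it is
determined by the other components.
-/

open Set
open scoped symmDiff

variable {A : Type*}

namespace Set

variable {α : Type*} {X Y W : Set α}

lemma ncard_symmDiff_eq_zero_iff (hX : X.Finite) (hY : Y.Finite) :
    (X ∆ Y).ncard = 0 ↔ X = Y := by
  rw [ncard_eq_zero (hX.symmDiff hY), symmDiff_eq_empty]

lemma ncard_symmDiff_triangle (hX : X.Finite) (hY : Y.Finite) (hW : W.Finite) :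
    (X ∆ W).ncard ≤ (X ∆ Y).ncard + (Y ∆ W).ncard :=
  (ncard_le_ncard (symmDiff_triangle X Y W) ((hX.symmDiff hY).union (hY.symmDiff hW))).trans
    (ncard_union_le _ _)

end Set

section

variable {k : ℕ} {Z Z' : KTV A}

lemma disjoint_length_lt_of_subset_length_eq {X : Set (List A)}
    (hX : X ⊆ {w | w.length = k - 1}) : Disjoint X {w | w.length < k - 1} :=
  disjoint_left.mpr fun _ hw hlt => lt_irrefl _ ((hX hw).symm.trans_lt hlt)

lemma ktvCard_ktvSymmDiff (hI : Z.I ⊆ {w | w.length = k - 1})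
    (hF : Z.F ⊆ {w | w.length = k - 1}) :
    ktvCard k (ktvSymmDiff Z Z') = (Z.I ∆ Z'.I).ncard + (Z.F ∆ Z'.F).ncard +
      (Z.T ∆ Z'.T).ncard +
      ((Z.C ∩ {w | w.length < k - 1}) ∆ (Z'.C ∩ {w | w.length < k - 1})).ncard := by
  have hIF := ((disjoint_length_lt_of_subset_length_eq hI).mono_left
    (inter_subset_left (t := Z'.F))).inter_eq
  have hFI := ((disjoint_length_lt_of_subset_length_eq hF).mono_left
    (inter_subset_right (s := Z'.I))).inter_eq
  simp only [ktvCard, ktvSymmDiff, inter_symmDiff_distrib_right, hIF, hFI, ← bot_eq_empty,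
    symmDiff_bot]

lemma finite_inter_length_lt [Finite A] (C : Set (List A)) (n : ℕ) :
    (C ∩ {w | w.length < n}).Finite :=
  (List.finite_length_lt A n).subset inter_subset_right

namespace IsKTV

lemma C_eq_union (hZ : IsKTV k Z) :
    Z.C = (Z.C ∩ {w | w.length < k - 1}) ∪ (Z.I ∩ Z.F) := by
  rw [hZ.2.2.2.2, ← inter_union_distrib_left, left_eq_inter]
  intro w hw
  have : w.length < k := hZ.2.2.2.1 hw
  simp only [mem_union, mem_ofPred_eq]
  omega

lemma ext (hZ : IsKTV k Z) (hZ' : IsKTV k Z') (hI : Z.I = Z'.I) (hF : Z.F = Z'.F)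
    (hT : Z.T = Z'.T) (hC : Z.C ∩ {w | w.length < k - 1} = Z'.C ∩ {w | w.length < k - 1}) :
    Z = Z' := by
  have : Z.C = Z'.C := by rw [hZ.C_eq_union, hZ'.C_eq_union, hI, hF, hC]
  cases Z; cases Z'
  simp_all

variable [Finite A]

lemma finite_I (hZ : IsKTV k Z) : Z.I.Finite := (List.finite_length_eq A _).subset hZ.1

lemma finite_F (hZ : IsKTV k Z) : Z.F.Finite := (List.finite_length_eq A _).subset hZ.2.1

lemma finite_T (hZ : IsKTV k Z) : Z.T.Finite := (List.finite_length_eq A _).subset hZ.2.2.1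

end IsKTV

end

theorem stmt18_general {A : Type*} [Fintype A] (k : ℕ)
    (Z Z' Z'' : KTV A) (hZ : IsKTV k Z) (hZ' : IsKTV k Z') (hZ'' : IsKTV k Z'') :
    0 ≤ ktvCard k (ktvSymmDiff Z Z') ∧
    (ktvCard k (ktvSymmDiff Z Z') = 0 ↔ Z = Z') ∧
    ktvCard k (ktvSymmDiff Z Z') = ktvCard k (ktvSymmDiff Z' Z) ∧
    ktvCard k (ktvSymmDiff Z Z'') ≤
      ktvCard k (ktvSymmDiff Z Z') + ktvCard k (ktvSymmDiff Z' Z'') := by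
  simp only [ktvCard_ktvSymmDiff hZ.1 hZ.2.1, ktvCard_ktvSymmDiff hZ'.1 hZ'.2.1]
  refine ⟨Nat.zero_le _, ?_, by simp only [symmDiff_comm], ?_⟩
  · simp only [Nat.add_eq_zero_iff, ncard_symmDiff_eq_zero_iff hZ.finite_I hZ'.finite_I,
      ncard_symmDiff_eq_zero_iff hZ.finite_F hZ'.finite_F,
      ncard_symmDiff_eq_zero_iff hZ.finite_T hZ'.finite_T,
      ncard_symmDiff_eq_zero_iff (finite_inter_length_lt Z.C _) (finite_inter_length_lt Z'.C _)]
    constructor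
    · rintro ⟨⟨⟨hI, hF⟩, hT⟩, hC⟩
      exact hZ.ext hZ' hI hF hT hC
    · rintro rfl
      simp
  · have := ncard_symmDiff_triangle hZ.finite_I hZ'.finite_I hZ''.finite_I
    have := ncard_symmDiff_triangle hZ.finite_F hZ'.finite_F hZ''.finite_F
    have := ncard_symmDiff_triangle hZ.finite_T hZ'.finite_T hZ''.finite_T
    have := ncard_symmDiff_triangle (finite_inter_length_lt Z.C (k - 1))
      (finite_inter_length_lt Z'.C (k - 1)) (finite_inter_length_lt Z''.C (k - 1))
    omega

/-- `d(Z,Z') = |Z △ Z'|` is a metric on `𝒯_k`. -/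
theorem stmt18 {A : Type*} [Fintype A] (k : ℕ) (hk : 0 < k)
    (Z Z' Z'' : KTV A) (hZ : IsKTV k Z) (hZ' : IsKTV k Z') (hZ'' : IsKTV k Z'') :
    0 ≤ ktvCard k (ktvSymmDiff Z Z') ∧
    (ktvCard k (ktvSymmDiff Z Z') = 0 ↔ Z = Z') ∧
    ktvCard k (ktvSymmDiff Z Z') = ktvCard k (ktvSymmDiff Z' Z) ∧
    ktvCard k (ktvSymmDiff Z Z'') ≤
      ktvCard k (ktvSymmDiff Z Z') + ktvCard k (ktvSymmDiff Z' Z'') :=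
  stmt18_general k Z Z' Z'' hZ hZ' hZ''
end
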